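/- The measure μ = m_1 + m_2 on the hyperbolic plane has linear growth: there exists c > 0 such that μ(B_h(w,s)) ≤ c·s for every point w in the upper half plane and every s > 0. -/

import Mathlib

open MeasureTheory Real Set

noncomputable section

/-- Open euclidean ball in `ℝ × ℝ` with center `c` and radius `r`. -/
def eBall (c : ℝ × ℝ) (r : ℝ) : Set (ℝ × ℝ) :=
  {p | (p.1 - c.1) ^ 2 + (p.2 - c.2) ^ 2 < r ^ 2}

/-- Open hyperbolic ball (upper half-plane model) with center `w` and radius `s`,
characterized via `cosh (d_h p w) = 1 + |p - w|² / (2 p₂ w₂)`. -/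
def hBall (w : ℝ × ℝ) (s : ℝ) : Set (ℝ × ℝ) :=
  {p | 0 < p.2 ∧ 1 + ((p.1 - w.1) ^ 2 + (p.2 - w.2) ^ 2) / (2 * p.2 * w.2) < Real.cosh s}

/-- The restriction to the upper half plane of the standard Gaussian measure on `ℝ²`. -/
def m1 : Measure (ℝ × ℝ) :=
  (volume.restrict {p : ℝ × ℝ | 0 < p.2}).withDensity
    (fun p => ENNReal.ofReal ((2 * π)⁻¹ * Real.exp (-(p.1 ^ 2 + p.2 ^ 2) / 2)))

/-- The region `A = {(x,y) : x > 1, 0 < y < 1/x}`. -/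
def regA : Set (ℝ × ℝ) := {p | 1 < p.1 ∧ 0 < p.2 ∧ p.2 < p.1⁻¹}

/-- Lebesgue measure restricted to `A`. -/
def m2 : Measure (ℝ × ℝ) := volume.restrict regA

/-- The measure `μ = m₁ + m₂`. -/
def mu : Measure (ℝ × ℝ) := m1 + m2

/-- The centered maximal function of a measure `ν` with respect to `μ`,
using hyperbolic balls. -/
def Mmax (μ ν : Measure (ℝ × ℝ)) (w : ℝ × ℝ) : ENNReal :=
  ⨆ (s : ℝ) (_ : 0 < s), ν (hBall w s) / μ (hBall w s)

/-! The hyperbolic ball `B_h(w, s)` lies in the horizontal strip `w₂ e^{-s} < y < w₂ e^s`.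
Each of `m₁` and `m₂` gives a strip `a < y < b` mass at most `log b - log a`: the density of the
`y`-marginal of the Gaussian is bounded by `1 / y`, and the horizontal section of `A` at height
`y` has length `(1 / y - 1)⁺ ≤ 1 / y`. Hence `μ(B_h(w, s)) ≤ 2 · 2s`. -/

open ProbabilityTheory
open scoped NNReal

lemma lintegral_ofReal_inv_Ioo {a b : ℝ} (ha : 0 < a) (hab : a ≤ b) :
    ∫⁻ y in Ioo a b, ENNReal.ofReal y⁻¹ = ENNReal.ofReal (log b - log a) := by
  have hint : IntegrableOn (fun y : ℝ => y⁻¹) (Ioo a b) :=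
    (continuousOn_inv₀.mono fun y hy => (ha.trans_le hy.1).ne').integrableOn_Icc.mono_set
      Ioo_subset_Icc_self
  have hnonneg : 0 ≤ᵐ[volume.restrict (Ioo a b)] fun y : ℝ => y⁻¹ := by
    filter_upwards [ae_restrict_mem measurableSet_Ioo] with y hy
    exact inv_nonneg.mpr (ha.trans hy.1).le
  rw [← ofReal_integral_eq_lintegral_ofReal hint hnonneg, ← integral_Ioc_eq_integral_Ioo,
    ← intervalIntegral.integral_of_le hab, integral_inv_of_pos ha (ha.trans_le hab),
    log_div (ha.trans_le hab).ne' ha.ne']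

lemma gaussianPDFReal_zero_one_le_inv {y : ℝ} (hy : 0 < y) : gaussianPDFReal 0 1 y ≤ y⁻¹ := by
  have hsqrt : 1 ≤ √(2 * π * (1 : ℝ≥0)) := by
    rw [NNReal.coe_one, mul_one, one_le_sqrt]
    linarith [pi_gt_three]
  have hexp : y ≤ exp (y ^ 2 / 2) :=
    (by nlinarith [sq_nonneg (y - 1)] : y ≤ y ^ 2 / 2 + 1).trans (add_one_le_exp _)
  calc gaussianPDFReal 0 1 y = (√(2 * π * (1 : ℝ≥0)))⁻¹ * (exp (y ^ 2 / 2))⁻¹ := by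
        rw [gaussianPDFReal, ← exp_neg]; congr 2; push_cast; ring
    _ ≤ 1 * y⁻¹ := by gcongr; exact inv_le_one_of_one_le₀ hsqrt
    _ = y⁻¹ := one_mul _

lemma gaussianReal_Ioo_le {a b : ℝ} (ha : 0 < a) (hab : a ≤ b) :
    gaussianReal 0 1 (Ioo a b) ≤ ENNReal.ofReal (log b - log a) := by
  rw [gaussianReal_apply 0 one_ne_zero, ← lintegral_ofReal_inv_Ioo ha hab]
  exact setLIntegral_mono' measurableSet_Ioo fun y hy =>
    ENNReal.ofReal_le_ofReal (gaussianPDFReal_zero_one_le_inv (ha.trans hy.1))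

lemma m1_le_gaussianReal_prod : m1 ≤ (gaussianReal 0 1).prod (gaussianReal 0 1) := by
  have hdensity : (fun p : ℝ × ℝ => ENNReal.ofReal ((2 * π)⁻¹ * exp (-(p.1 ^ 2 + p.2 ^ 2) / 2)))
      = fun p => gaussianPDF 0 1 p.1 * gaussianPDF 0 1 p.2 := by
    funext p
    rw [gaussianPDF, gaussianPDF, ← ENNReal.ofReal_mul (gaussianPDFReal_nonneg 0 1 _)]
    simp only [gaussianPDFReal, NNReal.coe_one, mul_one, sub_zero]
    rw [mul_mul_mul_comm, ← mul_inv, mul_self_sqrt (by positivity), ← exp_add]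
    ring_nf
  rw [gaussianReal_of_var_ne_zero 0 one_ne_zero,
    prod_withDensity (measurable_gaussianPDF 0 1) (measurable_gaussianPDF 0 1),
    ← Measure.volume_eq_prod, m1, ← hdensity,
    ← restrict_withDensity (measurableSet_lt measurable_const measurable_snd)]
  exact Measure.restrict_le_self

lemma m1_strip_le {a b : ℝ} (ha : 0 < a) (hab : a ≤ b) :
    m1 (univ ×ˢ Ioo a b) ≤ ENNReal.ofReal (log b - log a) :=
  calc m1 (univ ×ˢ Ioo a b) ≤ (gaussianReal 0 1).prod (gaussianReal 0 1) (univ ×ˢ Ioo a b) :=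
        m1_le_gaussianReal_prod _
    _ = gaussianReal 0 1 (Ioo a b) := by rw [Measure.prod_prod, measure_univ, one_mul]
    _ ≤ ENNReal.ofReal (log b - log a) := gaussianReal_Ioo_le ha hab

lemma m2_strip_le {a b : ℝ} (ha : 0 < a) (hab : a ≤ b) :
    m2 (univ ×ˢ Ioo a b) ≤ ENNReal.ofReal (log b - log a) := by
  have hswap :
      Prod.swap ⁻¹' (univ ×ˢ Ioo a b ∩ regA) ⊆ regionBetween (fun _ => 1) Inv.inv (Ioo a b) := by
    rintro ⟨y, x⟩ ⟨⟨-, hy⟩, hx, -, hyx⟩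
    exact ⟨hy, hx, (lt_inv_comm₀ (ha.trans hy.1) (one_pos.trans hx)).mp hyx⟩
  calc m2 (univ ×ˢ Ioo a b) = volume (univ ×ˢ Ioo a b ∩ regA) :=
        Measure.restrict_apply (MeasurableSet.univ.prod measurableSet_Ioo)
    _ = volume (Prod.swap ⁻¹' (univ ×ˢ Ioo a b ∩ regA)) := by
        rw [Measure.volume_eq_prod]
        exact (Measure.measurePreserving_swap.measure_preimage_equiv
          (f := MeasurableEquiv.prodComm) _).symm
    _ ≤ volume (regionBetween (fun _ => 1) Inv.inv (Ioo a b)) := measure_mono hswap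
    _ = ∫⁻ y in Ioo a b, ENNReal.ofReal (y⁻¹ - 1) := by
        rw [Measure.volume_eq_prod,
          volume_regionBetween_eq_lintegral' measurable_const measurable_inv measurableSet_Ioo]
        rfl
    _ ≤ ∫⁻ y in Ioo a b, ENNReal.ofReal y⁻¹ :=
        lintegral_mono fun y => ENNReal.ofReal_le_ofReal (by linarith)
    _ = ENNReal.ofReal (log b - log a) := lintegral_ofReal_inv_Ioo ha hab

lemma hBall_subset_strip {w : ℝ × ℝ} {s : ℝ} (hw : 0 < w.2) (hs : 0 ≤ s) :
    hBall w s ⊆ univ ×ˢ Ioo (w.2 * exp (-s)) (w.2 * exp s) := by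
  rintro p ⟨hp, hlt⟩
  have hroots : (p.2 - w.2 * exp (-s)) * (p.2 - w.2 * exp s)
      = (p.2 - w.2) ^ 2 - 2 * p.2 * w.2 * (cosh s - 1) := by
    have hexp : exp s * exp (-s) = 1 := by rw [← exp_add, add_neg_cancel, exp_zero]
    linear_combination w.2 ^ 2 * hexp + 2 * p.2 * w.2 * cosh_eq s
  have hneg : (p.2 - w.2 * exp (-s)) * (p.2 - w.2 * exp s) < 0 := by
    have := (div_lt_iff₀ (by positivity)).mp (lt_sub_iff_add_lt'.mpr hlt)
    rw [hroots]; linarith [sq_nonneg (p.1 - w.1)]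
  have hle : w.2 * exp (-s) ≤ w.2 * exp s := by gcongr; linarith
  refine ⟨mem_univ _, ?_⟩
  rcases mul_neg_iff.mp hneg with ⟨h₁, h₂⟩ | ⟨h₁, h₂⟩
  · exact ⟨by linarith, by linarith⟩
  · linarith

theorem stmt16 :
    ∃ c : ℝ, 0 < c ∧ ∀ (w : ℝ × ℝ) (s : ℝ), 0 < w.2 → 0 < s →
      mu (hBall w s) ≤ ENNReal.ofReal (c * s) := by
  refine ⟨4, by norm_num, fun w s hw hs => ?_⟩
  have ha : 0 < w.2 * exp (-s) := by positivity
  have hab : w.2 * exp (-s) ≤ w.2 * exp s := by gcongr; linarith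
  have hlog : log (w.2 * exp s) - log (w.2 * exp (-s)) = 2 * s := by
    rw [log_mul hw.ne' (exp_ne_zero _), log_mul hw.ne' (exp_ne_zero _), log_exp, log_exp]
    ring
  calc mu (hBall w s) ≤ mu (univ ×ˢ Ioo (w.2 * exp (-s)) (w.2 * exp s)) :=
        measure_mono (hBall_subset_strip hw hs.le)
    _ = m1 (univ ×ˢ Ioo (w.2 * exp (-s)) (w.2 * exp s)) +
        m2 (univ ×ˢ Ioo (w.2 * exp (-s)) (w.2 * exp s)) := Measure.add_apply _ _ _
    _ ≤ ENNReal.ofReal (2 * s) + ENNReal.ofReal (2 * s) := by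
        rw [← hlog]; exact add_le_add (m1_strip_le ha hab) (m2_strip_le ha hab)
    _ = ENNReal.ofReal (4 * s) := by
        rw [← ENNReal.ofReal_add (by positivity) (by positivity)]; ring_nf
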